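/- Let r ∈ ℝ and let u : ℝ → ℝ be four times continuously differentiable on [0,1] with u(0) = 0, u(1) = 0, u'(0) = 0, and u'(1) = 0. Then −∫_0^1 e^{3rs}·u(s)·u''''(s) ds = ∫_0^1 e^{3rs}·(−(81r⁴/2)·u(s)² + 18r²·u'(s)² − u''(s)²) ds. -/

import Mathlib

/-!
Writing `a = 3r`, the integrand `e^{as} u u'''' + e^{as} (-(a⁴/2) u² + 2a² u'² - u''²)` is the
exact derivative of the flux
`e^{as} (u u''' - u' u'' - a u u'' + a u'² + a² u u' - (a³/2) u²)`,
found by integrating `e^{as} u u''''` by parts twice and then writing `e^{as} u u''`,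
`e^{as} u' u''` and `e^{as} u u'` as total derivatives plus lower-order terms. Every term of the
flux contains `u` or `u'`, so it vanishes at both clamped endpoints.
-/

open MeasureTheory Set

theorem intervalIntegral.integral_eq_sub_of_hasDerivWithinAt_Icc {f f' : ℝ → ℝ} {a b : ℝ}
    (hab : a ≤ b) (hderiv : ∀ x ∈ Icc a b, HasDerivWithinAt f (f' x) (Icc a b) x)
    (hint : IntervalIntegrable f' volume a b) : ∫ y in a..b, f' y = f b - f a :=
  integral_eq_sub_of_hasDerivAt_of_le hab (fun x hx => (hderiv x hx).continuousWithinAt)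
    (fun x hx => (hderiv x (Ioo_subset_Icc_self hx)).hasDerivAt (Icc_mem_nhds hx.1 hx.2)) hint

noncomputable def expWeightedFourthOrderFlux (a : ℝ) (u u' u'' u''' : ℝ → ℝ) (s : ℝ) : ℝ :=
  Real.exp (a * s) * (u s * u''' s - u' s * u'' s - a * (u s * u'' s) + a * u' s ^ 2
    + a ^ 2 * (u s * u' s) - a ^ 3 / 2 * u s ^ 2)

theorem expWeightedFourthOrderFlux_eq_zero {a s : ℝ} {u u' u'' u''' : ℝ → ℝ}
    (hu : u s = 0) (hu' : u' s = 0) : expWeightedFourthOrderFlux a u u' u'' u''' s = 0 := by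
  simp [expWeightedFourthOrderFlux, hu, hu']

theorem hasDerivWithinAt_expWeightedFourthOrderFlux {a x d : ℝ} {t : Set ℝ}
    {u u' u'' u''' : ℝ → ℝ}
    (hu : HasDerivWithinAt u (u' x) t x) (hu' : HasDerivWithinAt u' (u'' x) t x)
    (hu'' : HasDerivWithinAt u'' (u''' x) t x) (hu''' : HasDerivWithinAt u''' d t x) :
    HasDerivWithinAt (expWeightedFourthOrderFlux a u u' u'' u''')
      (Real.exp (a * x) * u x * d
        + Real.exp (a * x) * (-(a ^ 4 / 2) * u x ^ 2 + 2 * a ^ 2 * u' x ^ 2 - u'' x ^ 2)) t x := by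
  have hexp : HasDerivWithinAt (fun s => Real.exp (a * s)) (Real.exp (a * x) * a) t x := by
    simpa using ((hasDerivAt_id x).const_mul a).exp.hasDerivWithinAt
  have hbracket := (((((hu.mul hu''').sub (hu'.mul hu'')).sub ((hu.mul hu'').const_mul a)).add
    ((hu'.pow 2).const_mul a)).add ((hu.mul hu').const_mul (a ^ 2))).sub
    ((hu.pow 2).const_mul (a ^ 3 / 2))
  refine (hexp.mul hbracket).congr_deriv ?_
  simp only [Pi.add_apply, Pi.sub_apply, Pi.mul_apply, Pi.pow_apply]
  ring

theorem neg_integral_exp_mul_mul_fourth_deriv {a α β : ℝ} (hαβ : α ≤ β)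
    {u u' u'' u''' u'''' : ℝ → ℝ}
    (hu : ∀ x ∈ Icc α β, HasDerivWithinAt u (u' x) (Icc α β) x)
    (hu' : ∀ x ∈ Icc α β, HasDerivWithinAt u' (u'' x) (Icc α β) x)
    (hu'' : ∀ x ∈ Icc α β, HasDerivWithinAt u'' (u''' x) (Icc α β) x)
    (hu''' : ∀ x ∈ Icc α β, HasDerivWithinAt u''' (u'''' x) (Icc α β) x)
    (hcont : ContinuousOn u'''' (Icc α β))
    (hα : u α = 0) (hβ : u β = 0) (hα' : u' α = 0) (hβ' : u' β = 0) :
    (-∫ s in α..β, Real.exp (a * s) * u s * u'''' s)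
      = ∫ s in α..β,
          Real.exp (a * s) * (-(a ^ 4 / 2) * u s ^ 2 + 2 * a ^ 2 * u' s ^ 2 - u'' s ^ 2) := by
  have hcu : ContinuousOn u (Icc α β) := fun x hx => (hu x hx).continuousWithinAt
  have hcu' : ContinuousOn u' (Icc α β) := fun x hx => (hu' x hx).continuousWithinAt
  have hcu'' : ContinuousOn u'' (Icc α β) := fun x hx => (hu'' x hx).continuousWithinAt
  have hexp : ContinuousOn (fun s => Real.exp (a * s)) (Icc α β) := by fun_prop
  have hfourth : IntervalIntegrable (fun s => Real.exp (a * s) * u s * u'''' s) volume α β :=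
    ((hexp.mul hcu).mul hcont).intervalIntegrable_of_Icc hαβ
  have hlower : IntervalIntegrable (fun s => Real.exp (a * s)
      * (-(a ^ 4 / 2) * u s ^ 2 + 2 * a ^ 2 * u' s ^ 2 - u'' s ^ 2)) volume α β :=
    (hexp.mul (((continuousOn_const.mul (hcu.pow 2)).add (continuousOn_const.mul (hcu'.pow 2))).sub
      (hcu''.pow 2))).intervalIntegrable_of_Icc hαβ
  have hflux := intervalIntegral.integral_eq_sub_of_hasDerivWithinAt_Icc hαβ
    (fun x hx => hasDerivWithinAt_expWeightedFourthOrderFlux (a := a)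
      (hu x hx) (hu' x hx) (hu'' x hx) (hu''' x hx)) (hfourth.add hlower)
  rw [intervalIntegral.integral_add hfourth hlower, expWeightedFourthOrderFlux_eq_zero hβ hβ',
    expWeightedFourthOrderFlux_eq_zero hα hα'] at hflux
  linarith

theorem KSE_fourth_order_integration_by_parts (r : ℝ) (u u' u'' u''' u'''' : ℝ → ℝ)
    (hu' : ∀ x ∈ Set.Icc (0:ℝ) 1, HasDerivWithinAt u (u' x) (Set.Icc 0 1) x)
    (hu'' : ∀ x ∈ Set.Icc (0:ℝ) 1, HasDerivWithinAt u' (u'' x) (Set.Icc 0 1) x)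
    (hu''' : ∀ x ∈ Set.Icc (0:ℝ) 1, HasDerivWithinAt u'' (u''' x) (Set.Icc 0 1) x)
    (hu'''' : ∀ x ∈ Set.Icc (0:ℝ) 1, HasDerivWithinAt u''' (u'''' x) (Set.Icc 0 1) x)
    (hcont : ContinuousOn u'''' (Set.Icc 0 1))
    (h0 : u 0 = 0) (h1 : u 1 = 0) (h0' : u' 0 = 0) (h1' : u' 1 = 0) :
    (-∫ s in (0:ℝ)..1, Real.exp (3 * r * s) * u s * u'''' s)
    = ∫ s in (0:ℝ)..1,
        Real.exp (3 * r * s)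
          * (-(81 * r ^ 4 / 2) * u s ^ 2 + 18 * r ^ 2 * u' s ^ 2 - u'' s ^ 2) := by
  rw [neg_integral_exp_mul_mul_fourth_deriv zero_le_one hu' hu'' hu''' hu'''' hcont h0 h1 h0' h1']
  congr 1
  ext s
  ring
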